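/- arXiv:2104.04845 — 2 statements merged into one kernel-verified Lean document; each statement's English description precedes it below -/
import Mathlib

section
/- Let A, B, C be finite-dimensional real vector spaces with dim A = l, fitting in a short exact sequence 0 → A →ⁱ B →π C → 0. Suppose β₁, …, β_l ∈ B* are covectors whose restrictions i*β₁, …, i*β_l form a basis of A*. Then for any γ ∈ Λ^{k-l} C*, the residue map satisfies Res(β₁ ∧ … ∧ β_l ∧ π*γ) = γ ⊗ (i*β₁ ∧ … ∧ i*β_l) in Λ^{k-l} C* ⊗ Λˡ A*. -/
/-!
The shuffle sum defining `β₁ ∧ … ∧ β_l ∧ π*γ`, evaluated on `(i a, σ c)`, has a single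
surviving term: any shuffle feeding some `i a_j` to `π*γ` vanishes because `π ∘ i = 0`, and a
permutation keeping the last block in place is trivial modulo `Perm (Fin l) × Perm (Fin m)`.
The remaining term is `det (β_p (i a_q)) ⊗ γ (π σ c) = det (β_p (i a_q)) ⊗ γ c`.
-/

open Module TensorProduct Equiv

theorem Equiv.Perm.modSumCongr_mk_eq_one_of_mapsTo_inr {ιa ιb : Type*} [Finite ιa] [Finite ιb]
    {p : Perm (ιa ⊕ ιb)} (hp : Set.MapsTo p (Set.range Sum.inr) (Set.range Sum.inr)) :
    (Quotient.mk'' p : Perm.ModSumCongr ιa ιb) = Quotient.mk'' 1 := by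
  have hmem := Perm.mem_sumCongrHom_range_of_perm_mapsTo_inl
    ((Perm.perm_mapsTo_inl_iff_mapsTo_inr p).mpr hp)
  exact Quotient.sound' (QuotientGroup.leftRel_apply.mpr (by simpa using inv_mem hmem))

namespace AlternatingMap

variable {ιa ιb : Type*} [Fintype ιa] [Fintype ιb] [DecidableEq ιa] [DecidableEq ιb]
  {R : Type*} {M N₁ N₂ : Type*} [CommSemiring R] [AddCommGroup N₁] [Module R N₁]
  [AddCommGroup N₂] [Module R N₂] [AddCommMonoid M] [Module R M]

theorem domCoprod.summand_mk''_apply_eq_zero (f : M [⋀^ιa]→ₗ[R] N₁) (g : M [⋀^ιb]→ₗ[R] N₂)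
    {v : ιa ⊕ ιb → M} (hg : ∀ (w : ιb → M) (k : ιb) (j : ιa), w k = v (Sum.inl j) → g w = 0)
    {p : Perm (ιa ⊕ ιb)} {k : ιb} {j : ιa} (hpk : p (Sum.inr k) = Sum.inl j) :
    domCoprod.summand f g (Quotient.mk'' p) v = 0 := by
  have hzero : g (fun k' => v (p (Sum.inr k'))) = 0 := hg _ k j (by rw [hpk])
  simp only [domCoprod.summand_mk'', _root_.smul_apply, MultilinearMap.domDomCongr_apply,
    MultilinearMap.domCoprod_apply, coe_multilinearMap]
  rw [hzero, tmul_zero, smul_zero]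

theorem domCoprod_apply_eq_tmul_of_map_eq_zero (f : M [⋀^ιa]→ₗ[R] N₁) (g : M [⋀^ιb]→ₗ[R] N₂)
    {v : ιa ⊕ ιb → M} (hg : ∀ (w : ιb → M) (k : ιb) (j : ιa), w k = v (Sum.inl j) → g w = 0) :
    f.domCoprod g v = f (v ∘ Sum.inl) ⊗ₜ g (v ∘ Sum.inr) := by
  have hsingle : f.domCoprod g v = domCoprod.summand f g (Quotient.mk'' 1) v := by
    rw [domCoprod_apply, _root_.sum_apply]
    refine Finset.sum_eq_single_of_mem _ (Finset.mem_univ _) fun q _ hq => ?_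
    induction q using Quotient.inductionOn' with | h p => ?_
    obtain ⟨k, hk⟩ : ∃ k, p (Sum.inr k) ∉ Set.range Sum.inr := by
      by_contra! hp
      exact hq (Perm.modSumCongr_mk_eq_one_of_mapsTo_inr (by rintro _ ⟨k, rfl⟩; exact hp k))
    obtain ⟨j, hj⟩ : ∃ j, p (Sum.inr k) = Sum.inl j := by
      cases h : p (Sum.inr k) with
      | inl j => exact ⟨j, rfl⟩
      | inr k' => exact absurd ⟨k', h.symm⟩ hk
    exact domCoprod.summand_mk''_apply_eq_zero f g hg hj
  rw [hsingle, domCoprod.summand_mk'']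
  simp [Function.comp_def]

end AlternatingMap

theorem stmt1_general {A B C : Type*} [AddCommGroup A] [Module ℝ A] [AddCommGroup B] [Module ℝ B]
    [AddCommGroup C] [Module ℝ C]
    (i : A →ₗ[ℝ] B) (π : B →ₗ[ℝ] C)
    (hex : LinearMap.range i = LinearMap.ker π)
    {l m : ℕ}
    (β : Fin l → (B →ₗ[ℝ] ℝ))
    (γ : C [⋀^Fin m]→ₗ[ℝ] ℝ)
    (σ : C →ₗ[ℝ] B) (hσ : π ∘ₗ σ = LinearMap.id)
    (a : Fin l → A) (c : Fin m → C) :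
    TensorProduct.lid ℝ ℝ
      ((AlternatingMap.domCoprod
          ((Matrix.detRowAlternating : (Fin l → ℝ) [⋀^Fin l]→ₗ[ℝ] ℝ).compLinearMap
            (LinearMap.pi β))
          (γ.compLinearMap π))
        (Sum.elim (fun j => i (a j)) (fun j => σ (c j))))
      = γ c * Matrix.det (Matrix.of fun q r => β q (i (a r))) := by
  have hπi : ∀ j, π (i (a j)) = 0 := fun j =>
    LinearMap.mem_ker.mp (hex ▸ LinearMap.mem_range_self i (a j))
  have hπσ : ∀ x, π (σ x) = x := LinearMap.congr_fun hσ
  have hvanish : ∀ (w : Fin m → B) (k : Fin m) (j : Fin l),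
      w k = i (a j) → γ.compLinearMap π w = 0 := fun w k j hw =>
    γ.map_coord_zero k (by simp [hw, hπi])
  rw [AlternatingMap.domCoprod_apply_eq_tmul_of_map_eq_zero _ _ hvanish]
  simp only [lid_tmul, smul_eq_mul, Function.comp_def, Sum.elim_inl, Sum.elim_inr,
    AlternatingMap.compLinearMap_apply, hπσ, mul_comm (γ c)]
  rw [← Matrix.det_transpose]
  rfl

/-- For a short exact sequence `0 → A →ⁱ B →π C → 0` of finite-dimensional real vector
spaces with `dim A = l`, if `β₁, …, β_l ∈ B*` restrict along `i` to a basis of `A*`, then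
for any `γ ∈ Λᵐ C*` the residue of `β₁ ∧ … ∧ β_l ∧ π*γ` is `γ ⊗ (i*β₁ ∧ … ∧ i*β_l)`:
evaluating on vectors `a` of `A` and lifts `σ(c)` of vectors of `C` gives
`γ(c) · det(β_p(i a_q))`. -/
theorem stmt1 {A B C : Type*} [AddCommGroup A] [Module ℝ A] [AddCommGroup B] [Module ℝ B]
    [AddCommGroup C] [Module ℝ C] [FiniteDimensional ℝ A] [FiniteDimensional ℝ B]
    [FiniteDimensional ℝ C]
    (i : A →ₗ[ℝ] B) (π : B →ₗ[ℝ] C)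
    (hi : Function.Injective i) (hπ : Function.Surjective π)
    (hex : LinearMap.range i = LinearMap.ker π)
    {l m : ℕ} (hl : finrank ℝ A = l)
    (β : Fin l → (B →ₗ[ℝ] ℝ))
    (hind : LinearIndependent ℝ (fun j => (β j).comp i))
    (hspan : Submodule.span ℝ (Set.range fun j => (β j).comp i) = ⊤)
    (γ : C [⋀^Fin m]→ₗ[ℝ] ℝ)
    (σ : C →ₗ[ℝ] B) (hσ : π ∘ₗ σ = LinearMap.id)
    (a : Fin l → A) (c : Fin m → C) :
    TensorProduct.lid ℝ ℝ
      ((AlternatingMap.domCoprod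
          ((Matrix.detRowAlternating : (Fin l → ℝ) [⋀^Fin l]→ₗ[ℝ] ℝ).compLinearMap
            (LinearMap.pi β))
          (γ.compLinearMap π))
        (Sum.elim (fun j => i (a j)) (fun j => σ (c j))))
      = γ c * Matrix.det (Matrix.of fun q r => β q (i (a r))) :=
  stmt1_general i π hex β γ σ hσ a c
end

section
/- Let σ : ℂⁿ → ℂ be σ(z) = z₁⋯zₙ and let q : ℝ^{2n} → ℝ be q = |σ|², i.e. q(x₁,y₁,…,xₙ,yₙ) = ∏ᵢ (xᵢ² + yᵢ²). Then q is smooth, nonnegative, its zero set is the union of the n codimension-two subspaces {xᵢ = yᵢ = 0}, and the ideal generated by q in C^∞(ℝ^{2n}) equals the product of the ideals generated by the factors xᵢ² + yᵢ². -/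
namespace Stmt18

/-- The `ℝ`-subalgebra of smooth functions on `ℝ^{2n} = (ℝ²)ⁿ`. -/
def SmoothFns (n : ℕ) : Subalgebra ℝ ((Fin n → ℝ × ℝ) → ℝ) := {
  carrier := {f | ContDiff ℝ (⊤ : ℕ∞) f}
  mul_mem' := fun {f g} (hf : ContDiff ℝ (⊤ : ℕ∞) f) (hg : ContDiff ℝ (⊤ : ℕ∞) g) => hf.mul hg
  add_mem' := fun {f g} (hf : ContDiff ℝ (⊤ : ℕ∞) f) (hg : ContDiff ℝ (⊤ : ℕ∞) g) => hf.add hg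
  algebraMap_mem' := fun r =>
    (contDiff_const : ContDiff ℝ (⊤ : ℕ∞) fun _ : Fin n → ℝ × ℝ => algebraMap ℝ ℝ r) }

/-- For `σ(z) = z₁⋯zₙ` and `q = |σ|²`, i.e. `q(x,y) = ∏ᵢ (xᵢ² + yᵢ²)`, the function `q`
is smooth, nonnegative, its zero set is the union of the `n` codimension-two subspaces
`{xᵢ = yᵢ = 0}`, and the ideal `(q)` in `C^∞(ℝ^{2n})` equals the product of the ideals
`(xᵢ² + yᵢ²)`. -/
theorem stmt18 (n : ℕ) (q : SmoothFns n)
    (hq : (q : (Fin n → ℝ × ℝ) → ℝ) = fun p => ∏ i, ((p i).1 ^ 2 + (p i).2 ^ 2))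
    (f : Fin n → SmoothFns n)
    (hf : ∀ i, (f i : (Fin n → ℝ × ℝ) → ℝ) = fun p => (p i).1 ^ 2 + (p i).2 ^ 2) :
    ContDiff ℝ (⊤ : ℕ∞) (q : (Fin n → ℝ × ℝ) → ℝ) ∧
    (∀ p, 0 ≤ (q : (Fin n → ℝ × ℝ) → ℝ) p) ∧
    {p | (q : (Fin n → ℝ × ℝ) → ℝ) p = 0} = ⋃ i, {p : Fin n → ℝ × ℝ | p i = 0} ∧
    Ideal.span {q} = ∏ i, Ideal.span {f i} := by
  refine ⟨q.2, ?_, ?_, ?_⟩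
  · intro p
    rw [hq]
    exact Finset.prod_nonneg fun i _ => by positivity
  · ext p
    simp only [Set.mem_setOf_eq, hq, Set.mem_iUnion, Finset.prod_eq_zero_iff,
      Finset.mem_univ, true_and]
    constructor
    · rintro ⟨i, hi⟩
      refine ⟨i, ?_⟩
      have h1 : (p i).1 = 0 ∧ (p i).2 = 0 := by
        constructor <;> nlinarith [sq_nonneg (p i).1, sq_nonneg (p i).2]
      exact Prod.ext h1.1 h1.2
    · rintro ⟨i, hi⟩
      exact ⟨i, by rw [show p i = 0 from hi]; simp⟩
  · have hqf : q = ∏ i, f i := by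
      apply Subtype.ext
      have hc : ((∏ i, f i : SmoothFns n) : (Fin n → ℝ × ℝ) → ℝ)
          = ∏ i, (f i : (Fin n → ℝ × ℝ) → ℝ) := by
        exact map_prod (SmoothFns n).val f Finset.univ
      rw [hq, hc]
      funext p
      rw [Finset.prod_apply]
      exact Finset.prod_congr rfl fun i _ => by rw [hf i]
    rw [hqf, Ideal.prod_span_singleton]

end Stmt18
end
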